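/- arXiv:2209.02880 — 6 statements merged into one kernel-verified Lean document; each statement's English description precedes it below -/
import Mathlib

section
/- Suppose differentiable functions S, A, I, V, R, D : ℝ → ℝ satisfy the SAIVRD system for all t ≥ 0 with the stated initial conditions, and suppose in addition that S(t) ≥ 0 for all t ≥ 0. Then A(t) ≥ A₀·exp(−(w + μ)·t) > 0 for all t ≥ 0. -/
/-!
Along a solution, `A' = (β/N₀ · S − (w + μ)) A` is a scalar linear equation, so the integrating
factor gives `A t = A₀ · exp (∫₀ᵗ β/N₀ · S − (w + μ) t)`. The integral is nonnegative because
`S ≥ 0` and `β/N₀ ≥ 0`.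
-/

open Real intervalIntegral

theorem eq_mul_exp_integral_of_hasDerivAt_mul {a y : ℝ → ℝ} {t₀ t : ℝ} (ha : Continuous a)
    (hy : ∀ x ≥ t₀, HasDerivAt y (a x * y x) x) (ht : t₀ ≤ t) :
    y t = y t₀ * exp (∫ s in t₀..t, a s) := by
  set Φ : ℝ → ℝ := fun x => ∫ s in t₀..x, a s
  have hΦ : ∀ x, HasDerivAt Φ (a x) x := fun x =>
    integral_hasDerivAt_right (ha.intervalIntegrable t₀ x) (ha.stronglyMeasurableAtFilter _ _)
      ha.continuousAt
  set F : ℝ → ℝ := fun x => y x * exp (-Φ x)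
  have hF : ∀ x ≥ t₀, HasDerivAt F 0 x := fun x hx =>
    ((hy x hx).mul (hΦ x).neg.exp).congr_deriv (by ring)
  have hF_cont : ContinuousOn F (Set.Icc t₀ t) := fun x hx =>
    (hF x hx.1).continuousAt.continuousWithinAt
  have hF_const : F t = F t₀ :=
    constant_of_has_deriv_right_zero hF_cont (fun x hx => (hF x hx.1).hasDerivWithinAt) t
      ⟨ht, le_rfl⟩
  have hΦ₀ : Φ t₀ = 0 := integral_same
  calc y t = F t * exp (Φ t) := by
        simp only [F, mul_assoc, ← exp_add, neg_add_cancel, exp_zero, mul_one]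
    _ = y t₀ * exp (Φ t) := by simp only [hF_const, F, hΦ₀, neg_zero, exp_zero, mul_one]

theorem saivrd_A_positive_general
    (β w μ : ℝ) (hβ : 0 ≤ β)
    (S A : ℝ → ℝ) (S₀ A₀ N₀ : ℝ)
    (hS₀ : 0 < S₀) (hA₀ : 0 < A₀) (hN₀ : N₀ = S₀ + A₀)
    (hSdiff : Differentiable ℝ S)
    (hA' : ∀ t ≥ (0 : ℝ), HasDerivAt A ((β / N₀) * A t * S t - (w + μ) * A t) t)
    (hA0 : A 0 = A₀)
    (hSnonneg : ∀ t ≥ (0 : ℝ), 0 ≤ S t) :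
    ∀ t ≥ (0 : ℝ),
      A₀ * Real.exp (-(w + μ) * t) ≤ A t ∧
      0 < A₀ * Real.exp (-(w + μ) * t) := by
  intro t ht
  set a : ℝ → ℝ := fun s => β / N₀ * S s - (w + μ)
  have ha : Continuous a := (continuous_const.mul hSdiff.continuous).sub continuous_const
  have hA_sol : A t = A₀ * exp (∫ s in (0 : ℝ)..t, a s) := by
    rw [← hA0]
    exact eq_mul_exp_integral_of_hasDerivAt_mul ha
      (fun x hx => (hA' x hx).congr_deriv (by ring)) ht
  have hβN₀ : 0 ≤ β / N₀ := div_nonneg hβ (by linarith)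
  have h_int : -(w + μ) * t ≤ ∫ s in (0 : ℝ)..t, a s := by
    have h_inf : ∫ s in (0 : ℝ)..t, (-(w + μ)) ≤ ∫ s in (0 : ℝ)..t, a s :=
      integral_mono_on ht intervalIntegrable_const (ha.intervalIntegrable 0 t) fun s hs => by
        have := mul_nonneg hβN₀ (hSnonneg s hs.1)
        simp only [a]; linarith
    rw [integral_const, sub_zero, smul_eq_mul] at h_inf
    linarith
  refine ⟨?_, by positivity⟩
  rw [hA_sol]
  gcongr

/-- Lower bound on the asymptomatic class: if `S t ≥ 0` for all `t ≥ 0`, then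
`A t ≥ A₀ · exp(−(w + μ)·t) > 0` for all `t ≥ 0`. -/
theorem saivrd_A_positive
    (B β v w ρ γ μ : ℝ) (hB : 0 ≤ B) (hβ : 0 ≤ β) (hv : 0 ≤ v) (hw : 0 ≤ w)
    (hρ : 0 ≤ ρ) (hγ : 0 ≤ γ) (hμ : 0 < μ)
    (S A I V R D : ℝ → ℝ) (S₀ A₀ N₀ : ℝ)
    (hS₀ : 0 < S₀) (hA₀ : 0 < A₀) (hN₀ : N₀ = S₀ + A₀)
    (hSdiff : Differentiable ℝ S) (hAdiff : Differentiable ℝ A)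
    (hIdiff : Differentiable ℝ I) (hVdiff : Differentiable ℝ V)
    (hRdiff : Differentiable ℝ R) (hDdiff : Differentiable ℝ D)
    (hS' : ∀ t ≥ (0 : ℝ), HasDerivAt S (B - v * S t - (β / N₀) * A t * S t - μ * S t) t)
    (hA' : ∀ t ≥ (0 : ℝ), HasDerivAt A ((β / N₀) * A t * S t - (w + μ) * A t) t)
    (hI' : ∀ t ≥ (0 : ℝ), HasDerivAt I (w * A t - (ρ + γ + μ) * I t) t)
    (hV' : ∀ t ≥ (0 : ℝ), HasDerivAt V (v * S t - μ * V t) t)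
    (hR' : ∀ t ≥ (0 : ℝ), HasDerivAt R (γ * I t - μ * R t) t)
    (hD' : ∀ t ≥ (0 : ℝ), HasDerivAt D (ρ * I t) t)
    (hS0 : S 0 = S₀) (hA0 : A 0 = A₀) (hI0 : I 0 = 0) (hV0 : V 0 = 0)
    (hR0 : R 0 = 0) (hD0 : D 0 = 0)
    (hSnonneg : ∀ t ≥ (0 : ℝ), 0 ≤ S t) :
    ∀ t ≥ (0 : ℝ),
      A₀ * Real.exp (-(w + μ) * t) ≤ A t ∧
      0 < A₀ * Real.exp (-(w + μ) * t) :=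
  saivrd_A_positive_general β w μ hβ S A S₀ A₀ N₀ hS₀ hA₀ hN₀ hSdiff hA' hA0 hSnonneg
end

section
/- Let B, β, v, w, ρ, γ be real numbers, μ > 0, N₀ > 0 with v + μ ≠ 0. The characteristic polynomial of the 5×5 real matrix J_DFE equals (X + (v+μ))·(X + (ρ+γ+μ))·(X + μ)²·(X − (Bβ/(N₀(v+μ)) − (w+μ))); in particular, its roots are −(v+μ), −(ρ+γ+μ), −μ (with multiplicity 2), and Bβ/(N₀(v+μ)) − (w+μ). -/
open Polynomial

namespace Matrix

variable {n R α : Type*} [Fintype n] [DecidableEq n] [CommRing R] [LinearOrder α]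

theorem BlockTriangular.charpoly_of_injective {M : Matrix n n R} {b : n → α}
    (h : M.BlockTriangular b) (hb : Function.Injective b) :
    M.charpoly = ∏ i, (X - C (M i i)) :=
  letI : LinearOrder n := LinearOrder.lift' b hb
  charpoly_of_isUpperTriangular M h

end Matrix

theorem charpoly_jacobian_DFE_general
    (B β v w ρ γ μ N₀ : ℝ) :
    let J : Matrix (Fin 5) (Fin 5) ℝ :=
      !![-(v + μ), -(B * β / (N₀ * (v + μ))), 0, 0, 0;
         0, B * β / (N₀ * (v + μ)) - (w + μ), 0, 0, 0;
         0, w, -(ρ + γ + μ), 0, 0;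
         v, 0, 0, -μ, 0;
         0, 0, γ, 0, -μ]
    J.charpoly =
      (X + C (v + μ)) * (X + C (ρ + γ + μ)) * (X + C μ) ^ 2 *
        (X - C (B * β / (N₀ * (v + μ)) - (w + μ))) ∧
    J.charpoly.roots =
      {-(v + μ), -(ρ + γ + μ), -μ, -μ, B * β / (N₀ * (v + μ)) - (w + μ)} := by
  intro J
  -- In the compartment order R, I, V, S, A the matrix `J` is upper triangular.
  have hJ : J.BlockTriangular ![3, 4, 1, 2, 0] := by
    intro i j hij
    fin_cases i <;> fin_cases j <;> simp_all [J]
  have hb : Function.Injective (![3, 4, 1, 2, 0] : Fin 5 → ℕ) := by decide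
  have hprod : J.charpoly = (({-(v + μ), -(ρ + γ + μ), -μ, -μ,
      B * β / (N₀ * (v + μ)) - (w + μ)} : Multiset ℝ).map (X - C ·)).prod := by
    rw [hJ.charpoly_of_injective hb, Fin.prod_univ_five]
    simp only [J, Matrix.of_apply, Matrix.cons_val', Matrix.cons_val, Matrix.cons_val_fin_one,
      Multiset.insert_eq_cons, Multiset.map_cons, Multiset.map_singleton, Multiset.prod_cons,
      Multiset.prod_singleton]
    ring
  refine ⟨?_, by rw [hprod, roots_multiset_prod_X_sub_C]⟩
  rw [hprod]
  simp only [Multiset.insert_eq_cons, Multiset.map_cons, Multiset.map_singleton,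
    Multiset.prod_cons, Multiset.prod_singleton, map_neg, map_sub, sub_neg_eq_add]
  ring

/-- The characteristic polynomial of the Jacobian of the reduced SAIVRD system at the
disease-free equilibrium factors as
`(X + (v+μ))(X + (ρ+γ+μ))(X + μ)²(X − (Bβ/(N₀(v+μ)) − (w+μ)))`;
in particular its roots are `−(v+μ), −(ρ+γ+μ), −μ` (twice) and `Bβ/(N₀(v+μ)) − (w+μ)`. -/
theorem charpoly_jacobian_DFE
    (B β v w ρ γ μ N₀ : ℝ) (hμ : 0 < μ) (hN₀ : 0 < N₀) (hvμ : v + μ ≠ 0) :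
    let J : Matrix (Fin 5) (Fin 5) ℝ :=
      !![-(v + μ), -(B * β / (N₀ * (v + μ))), 0, 0, 0;
         0, B * β / (N₀ * (v + μ)) - (w + μ), 0, 0, 0;
         0, w, -(ρ + γ + μ), 0, 0;
         v, 0, 0, -μ, 0;
         0, 0, γ, 0, -μ]
    J.charpoly =
      (X + C (v + μ)) * (X + C (ρ + γ + μ)) * (X + C μ) ^ 2 *
        (X - C (B * β / (N₀ * (v + μ)) - (w + μ))) ∧
    J.charpoly.roots =
      {-(v + μ), -(ρ + γ + μ), -μ, -μ, B * β / (N₀ * (v + μ)) - (w + μ)} :=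
  charpoly_jacobian_DFE_general B β v w ρ γ μ N₀
end

section
/- Let B, β, v, w, ρ, γ, μ, N₀ > 0 and suppose R₀ = Bβ/(N₀(v+μ)(w+μ)) > 1. Define S* = (w+μ)N₀/β, A* = (B − (v+μ)(w+μ)N₀/β)/(w+μ), I* = wA*/(ρ+γ+μ), V* = v(w+μ)N₀/(βμ), R* = γI*/μ. Then S*, A*, I*, V*, R* are all positive and satisfy the equilibrium equations: 0 = B − vS* − (β/N₀)A*S* − μS*, 0 = (β/N₀)A*S* − (w+μ)A*, 0 = wA* − (ρ+γ+μ)I*, 0 = vS* − μV*, and 0 = γI* − μR*. -/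
/-- **Existence of the endemic equilibrium (Theorem 3.3, existence part).**
If `R₀ > 1`, the stated values `S*, A*, I*, V*, R*` are all positive and satisfy the
equilibrium equations of the SAIVRD model. -/
theorem endemic_equilibrium_exists
    (B β v w ρ γ μ N₀ : ℝ)
    (hB : 0 < B) (hβ : 0 < β) (hv : 0 < v) (hw : 0 < w)
    (hρ : 0 < ρ) (hγ : 0 < γ) (hμ : 0 < μ) (hN₀ : 0 < N₀)
    (hR0 : 1 < B * β / (N₀ * (v + μ) * (w + μ))) :
    let Sstar : ℝ := (w + μ) * N₀ / β
    let Astar : ℝ := (B - (v + μ) * (w + μ) * N₀ / β) / (w + μ)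
    let Istar : ℝ := w * Astar / (ρ + γ + μ)
    let Vstar : ℝ := v * (w + μ) * N₀ / (β * μ)
    let Rstar : ℝ := γ * Istar / μ
    (0 < Sstar ∧ 0 < Astar ∧ 0 < Istar ∧ 0 < Vstar ∧ 0 < Rstar) ∧
    (0 = B - v * Sstar - (β / N₀) * Astar * Sstar - μ * Sstar ∧
     0 = (β / N₀) * Astar * Sstar - (w + μ) * Astar ∧
     0 = w * Astar - (ρ + γ + μ) * Istar ∧
     0 = v * Sstar - μ * Vstar ∧
     0 = γ * Istar - μ * Rstar) := by
  intro Sstar Astar Istar Vstar Rstar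
  have hwμ : 0 < w + μ := by linarith
  have hvμ : 0 < v + μ := by linarith
  have hργμ : 0 < ρ + γ + μ := by linarith
  have hden : 0 < N₀ * (v + μ) * (w + μ) := by positivity
  have hkey : (v + μ) * (w + μ) * N₀ / β < B := by
    rw [div_lt_iff₀ hβ]
    have := (one_lt_div hden).mp hR0
    nlinarith
  have hS : 0 < Sstar := by positivity
  have hA : 0 < Astar := div_pos (by linarith) hwμ
  have hI : 0 < Istar := by positivity
  have hV : 0 < Vstar := by positivity
  have hR : 0 < Rstar := by positivity
  refine ⟨⟨hS, hA, hI, hV, hR⟩, ?_, ?_, ?_, ?_, ?_⟩ <;>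
    simp only [Sstar, Astar, Istar, Vstar, Rstar] <;>
    field_simp <;> ring
end

section
/- Let B, β, v, w, ρ, γ, μ, N₀ > 0. If (S*, A*, I*, V*, R*) ∈ ℝ⁵ with A* > 0 satisfies the equilibrium equations of the SAIVRD model, then necessarily S* = (w+μ)N₀/β, A* = (B − (v+μ)(w+μ)N₀/β)/(w+μ), I* = wA*/(ρ+γ+μ), V* = v(w+μ)N₀/(βμ), and R* = γI*/μ; in particular the endemic equilibrium is unique. -/
/-- **Uniqueness of the endemic equilibrium (Theorem 3.3, uniqueness part).**
Any solution of the equilibrium equations with `A* > 0` must equal the stated values. -/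
theorem endemic_equilibrium_unique
    (B β v w ρ γ μ N₀ : ℝ)
    (hB : 0 < B) (hβ : 0 < β) (hv : 0 < v) (hw : 0 < w)
    (hρ : 0 < ρ) (hγ : 0 < γ) (hμ : 0 < μ) (hN₀ : 0 < N₀)
    (Sstar Astar Istar Vstar Rstar : ℝ) (hA : 0 < Astar)
    (h1 : 0 = B - v * Sstar - (β / N₀) * Astar * Sstar - μ * Sstar)
    (h2 : 0 = (β / N₀) * Astar * Sstar - (w + μ) * Astar)
    (h3 : 0 = w * Astar - (ρ + γ + μ) * Istar)
    (h4 : 0 = v * Sstar - μ * Vstar)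
    (h5 : 0 = γ * Istar - μ * Rstar) :
    Sstar = (w + μ) * N₀ / β ∧
    Astar = (B - (v + μ) * (w + μ) * N₀ / β) / (w + μ) ∧
    Istar = w * Astar / (ρ + γ + μ) ∧
    Vstar = v * (w + μ) * N₀ / (β * μ) ∧
    Rstar = γ * Istar / μ := by
  have hβ' : β ≠ 0 := ne_of_gt hβ
  have hN' : N₀ ≠ 0 := ne_of_gt hN₀
  have hμ' : μ ≠ 0 := ne_of_gt hμ
  have hwμ : w + μ ≠ 0 := by positivity
  have hργμ : ρ + γ + μ ≠ 0 := by positivity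
  have hS : Sstar = (w + μ) * N₀ / β := by
    have h2' : (β / N₀) * Sstar = w + μ := by
      have := mul_right_cancel₀ (ne_of_gt hA)
        (show ((β / N₀) * Sstar) * Astar = (w + μ) * Astar by linarith [h2]; )
      linarith [this]
    field_simp at h2' ⊢
    linarith
  refine ⟨hS, ?_, ?_, ?_, ?_⟩
  · have : (w + μ) * Astar = B - (v + μ) * ((w + μ) * N₀ / β) := by
      have h2' : (β / N₀) * Astar * Sstar = (w + μ) * Astar := by linarith
      rw [← hS]; nlinarith [h1]
    field_simp at this ⊢
    linarith [this]
  · field_simp; linarith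
  · rw [hS] at h4; field_simp at h4 ⊢; linarith
  · field_simp; linarith
end

section
/- Let B, β, v, w, ρ, γ, μ, N₀ > 0 with R₀ = Bβ/(N₀(v+μ)(w+μ)) > 1, and let S* = (w+μ)N₀/β and A* = (B − (v+μ)(w+μ)N₀/β)/(w+μ) be the endemic equilibrium values. Then every complex root of the characteristic polynomial of the 5×5 real matrix J(S*, A*) has negative real part. (This expresses Theorem 3.3: the unique endemic equilibrium is locally asymptotically stable whenever R₀ > 1.) -/
/-! At the endemic equilibrium `(β/N₀) S* = w + μ`, so the Jacobian is block lower triangular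
with a `2 × 2` block of negative trace `-(v + μ + (β/N₀) A*)` and positive determinant
`(w + μ)(β/N₀) A*`, the positivity of `A*` being exactly `R₀ > 1`. Its characteristic
polynomial therefore factors as a quadratic with positive coefficients, whose roots lie in the
open left half-plane, times `(X + ρ + γ + μ)(X + μ)²`. -/

open Polynomial

def IsHurwitzStable (p : ℝ[X]) : Prop :=
  ∀ z : ℂ, (p.map (algebraMap ℝ ℂ)).IsRoot z → z.re < 0

namespace IsHurwitzStable

theorem one : IsHurwitzStable 1 := fun z hz => by simp at hz

theorem mul {p q : ℝ[X]} (hp : IsHurwitzStable p) (hq : IsHurwitzStable q) :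
    IsHurwitzStable (p * q) := fun z hz => by
  rw [Polynomial.map_mul, root_mul] at hz
  exact hz.elim (hp z) (hq z)

theorem pow {p : ℝ[X]} (hp : IsHurwitzStable p) : ∀ n : ℕ, IsHurwitzStable (p ^ n)
  | 0 => by simpa using one
  | n + 1 => by simpa [pow_succ] using (hp.pow n).mul hp

end IsHurwitzStable

theorem isHurwitzStable_X_add_C {r : ℝ} (hr : 0 < r) : IsHurwitzStable (X + C r) := fun z hz => by
  have hz' : z = -(r : ℂ) := by
    simpa [eq_neg_iff_add_eq_zero] using hz
  simpa [hz'] using hr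

theorem isHurwitzStable_quadratic {a k : ℝ} (ha : 0 < a) (hk : 0 < k) :
    IsHurwitzStable (X ^ 2 + C a * X + C k) := fun z hz => by
  have hz' : z ^ 2 + a * z + k = 0 := by simpa using hz
  have hre : z.re ^ 2 - z.im ^ 2 + a * z.re + k = 0 := by
    simpa [pow_two] using congrArg Complex.re hz'
  have him : z.im * (2 * z.re + a) = 0 := by
    linear_combination (by simpa [pow_two] using congrArg Complex.im hz' :
      z.re * z.im + z.im * z.re + a * z.im = 0)
  -- A real root would be negative since the coefficients are positive; a non-real one has
  -- real part `-a/2`.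
  rcases mul_eq_zero.mp him with h0 | h0
  · by_contra! hnn
    nlinarith
  · linarith

theorem charpoly_jacobian {R : Type*} [CommRing R] (a b c d w r g v m : R) :
    (!![-a, -b, 0, 0, 0;
        c, d, 0, 0, 0;
        0, w, -r, 0, 0;
        v, 0, g, -m, 0;
        0, 0, 0, 0, -m] : Matrix (Fin 5) (Fin 5) R).charpoly
      = (X ^ 2 + C (a - d) * X + C (b * c - a * d)) * (X + C r) * (X + C m) ^ 2 := by
  rw [Matrix.charpoly, Matrix.det_succ_row_zero]
  simp [Fin.sum_univ_succ, Matrix.det_succ_row_zero, Fin.succAbove, Matrix.charmatrix_apply]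
  ring

theorem endemic_equilibrium_stable_general
    (B β v w ρ γ μ N₀ : ℝ)
    (hβ : 0 < β) (hv : 0 < v) (hw : 0 < w)
    (hρ : 0 < ρ) (hγ : 0 < γ) (hμ : 0 < μ) (hN₀ : 0 < N₀)
    (hR0 : 1 < B * β / (N₀ * (v + μ) * (w + μ))) :
    let Sstar : ℝ := (w + μ) * N₀ / β
    let Astar : ℝ := (B - (v + μ) * (w + μ) * N₀ / β) / (w + μ)
    let J : Matrix (Fin 5) (Fin 5) ℝ :=
      !![-(v + (β / N₀) * Astar + μ), -((β / N₀) * Sstar), 0, 0, 0;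
         (β / N₀) * Astar, (β / N₀) * Sstar - (w + μ), 0, 0, 0;
         0, w, -(ρ + γ + μ), 0, 0;
         v, 0, γ, -μ, 0;
         0, 0, 0, 0, -μ]
    ∀ z : ℂ, (J.charpoly.map (algebraMap ℝ ℂ)).IsRoot z → z.re < 0 := by
  intro Sstar Astar J
  have hS : (β / N₀) * Sstar = w + μ := by
    simp only [Sstar]
    field_simp
  have hA : 0 < Astar := by
    have h := (one_lt_div (by positivity)).mp hR0
    refine div_pos ?_ (by positivity)
    rw [sub_pos, div_lt_iff₀ hβ]
    nlinarith
  change IsHurwitzStable J.charpoly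
  rw [charpoly_jacobian, hS, sub_self, mul_zero, sub_zero, sub_zero]
  refine ((isHurwitzStable_quadratic ?_ ?_).mul (isHurwitzStable_X_add_C ?_)).mul
    ((isHurwitzStable_X_add_C hμ).pow 2) <;> positivity

/-- **Theorem 3.3 (stability).** If `R₀ > 1`, then every complex root of the
characteristic polynomial of the Jacobian of the reduced SAIVRD system at the unique
endemic equilibrium has negative real part. -/
theorem endemic_equilibrium_stable
    (B β v w ρ γ μ N₀ : ℝ)
    (hB : 0 < B) (hβ : 0 < β) (hv : 0 < v) (hw : 0 < w)
    (hρ : 0 < ρ) (hγ : 0 < γ) (hμ : 0 < μ) (hN₀ : 0 < N₀)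
    (hR0 : 1 < B * β / (N₀ * (v + μ) * (w + μ))) :
    let Sstar : ℝ := (w + μ) * N₀ / β
    let Astar : ℝ := (B - (v + μ) * (w + μ) * N₀ / β) / (w + μ)
    let J : Matrix (Fin 5) (Fin 5) ℝ :=
      !![-(v + (β / N₀) * Astar + μ), -((β / N₀) * Sstar), 0, 0, 0;
         (β / N₀) * Astar, (β / N₀) * Sstar - (w + μ), 0, 0, 0;
         0, w, -(ρ + γ + μ), 0, 0;
         v, 0, γ, -μ, 0;
         0, 0, 0, 0, -μ]
    ∀ z : ℂ, (J.charpoly.map (algebraMap ℝ ℂ)).IsRoot z → z.re < 0 :=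
  endemic_equilibrium_stable_general B β v w ρ γ μ N₀ hβ hv hw hρ hγ hμ hN₀ hR0
end

section
/- Let β, v, w, ρ, γ, μ, N₀ be real numbers with N₀ ≠ 0, and let S*, A* be real numbers. The characteristic polynomial of the 5×5 real matrix J(S*, A*) equals (X + (ρ+γ+μ))·(X + μ)²·(X² + (v + w + 2μ + (β/N₀)(A* − S*))·X + ((v+μ)(w+μ − (β/N₀)S*) + (β/N₀)A*(w+μ))). -/
/-! The Jacobian is block lower triangular, with the 2×2 block of the (S, A) equations followed by
three 1×1 blocks, so its characteristic polynomial is `X² − tr X + det` of that block times the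
three linear factors. -/

open Polynomial

namespace Matrix

variable {R : Type*} [CommRing R]

theorem det_fin_five_of_blockLowerTriangular (a b c d e f g h i j k l m n o p : R) :
    !![a, b, 0, 0, 0; c, d, 0, 0, 0; e, f, g, 0, 0; h, i, j, k, 0; l, m, n, o, p].det =
      (a * d - b * c) * g * k * p := by
  simp [det_succ_row_zero, Fin.sum_univ_succ, Fin.succAbove]
  ring

theorem charpoly_fin_five_of_blockLowerTriangular (a b c d e f g h i j k l m n o p : R) :
    !![a, b, 0, 0, 0; c, d, 0, 0, 0; e, f, g, 0, 0; h, i, j, k, 0; l, m, n, o, p].charpoly =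
      (X ^ 2 - C (a + d) * X + C (a * d - b * c)) * (X - C g) * (X - C k) * (X - C p) := by
  have hcharmatrix :
      charmatrix !![a, b, 0, 0, 0; c, d, 0, 0, 0; e, f, g, 0, 0; h, i, j, k, 0; l, m, n, o, p] =
        !![X - C a, -C b, 0, 0, 0; -C c, X - C d, 0, 0, 0; -C e, -C f, X - C g, 0, 0;
          -C h, -C i, -C j, X - C k, 0; -C l, -C m, -C n, -C o, X - C p] := by
    ext r s
    fin_cases r <;> fin_cases s <;> simp
  rw [charpoly, hcharmatrix, det_fin_five_of_blockLowerTriangular]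
  simp only [C_add, C_sub, C_mul]
  ring

end Matrix

theorem charpoly_jacobian_general_general
    (β v w ρ γ μ N₀ : ℝ) (Sstar Astar : ℝ) :
    let J : Matrix (Fin 5) (Fin 5) ℝ :=
      !![-(v + (β / N₀) * Astar + μ), -((β / N₀) * Sstar), 0, 0, 0;
         (β / N₀) * Astar, (β / N₀) * Sstar - (w + μ), 0, 0, 0;
         0, w, -(ρ + γ + μ), 0, 0;
         v, 0, γ, -μ, 0;
         0, 0, 0, 0, -μ]
    J.charpoly =
      (X + C (ρ + γ + μ)) * (X + C μ) ^ 2 *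
        (X ^ 2 + C (v + w + 2 * μ + (β / N₀) * (Astar - Sstar)) * X +
          C ((v + μ) * (w + μ - (β / N₀) * Sstar) + (β / N₀) * Astar * (w + μ))) := by
  intro J
  rw [Matrix.charpoly_fin_five_of_blockLowerTriangular]
  simp only [C_add, C_sub, C_mul, C_neg, map_ofNat]
  ring

/-- The characteristic polynomial of the Jacobian `J(S*, A*)` of the reduced SAIVRD
system at a general equilibrium factors as
`(X + (ρ+γ+μ))(X + μ)²(X² + (v + w + 2μ + (β/N₀)(A* − S*))X + ((v+μ)(w+μ − (β/N₀)S*) + (β/N₀)A*(w+μ)))`. -/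
theorem charpoly_jacobian_general
    (β v w ρ γ μ N₀ : ℝ) (hN₀ : N₀ ≠ 0) (Sstar Astar : ℝ) :
    let J : Matrix (Fin 5) (Fin 5) ℝ :=
      !![-(v + (β / N₀) * Astar + μ), -((β / N₀) * Sstar), 0, 0, 0;
         (β / N₀) * Astar, (β / N₀) * Sstar - (w + μ), 0, 0, 0;
         0, w, -(ρ + γ + μ), 0, 0;
         v, 0, γ, -μ, 0;
         0, 0, 0, 0, -μ]
    J.charpoly =
      (X + C (ρ + γ + μ)) * (X + C μ) ^ 2 *
        (X ^ 2 + C (v + w + 2 * μ + (β / N₀) * (Astar - Sstar)) * X +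
          C ((v + μ) * (w + μ - (β / N₀) * Sstar) + (β / N₀) * Astar * (w + μ))) :=
  charpoly_jacobian_general_general β v w ρ γ μ N₀ Sstar Astar
end
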